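/- arXiv:2509.06008 — 2 statements merged into one kernel-verified Lean document; each statement's English description precedes it below -/
import Mathlib

section
/- Let ℓ be an even positive integer, k > 0, n ≥ 2, and ξ ∈ ℝⁿ ∖ {0} with |ξ| ≤ (ℓ+1)k. Let e₁ = ξ/|ξ| and e₂ a unit vector orthogonal to e₁, and define ζ^± = ((|ξ|−k)/ℓ) e₁ ± √(k² − ((|ξ|−k)/ℓ)²) e₂. Set ζ₀ = k e₁, and let ζ₁,…,ζ_ℓ alternate ζ⁺, ζ⁻, …, ζ⁺, ζ⁻ (ℓ/2 copies each). Then ζ₀·ζ₀ = k², ζ_j·ζ_j = k² for each j ∈ {1,…,ℓ}, and ζ₀ + Σ_{j=1}^{ℓ} ζ_j = ξ. -/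
/-! With `a = (|ξ| - k)/ℓ`, the bound `|ξ| ≤ (ℓ+1)k` together with `|ξ| ≥ 0` gives
`|a| ≤ k`. As `e₁, e₂` are orthonormal, `|ζ^±|² = a² + (k² - a²) = k²`, and the `ℓ/2` pairs
`ζ⁺ + ζ⁻ = 2a e₁` add up to `ℓ a e₁ = (|ξ| - k) e₁`, which together with `ζ₀ = k e₁` gives
`|ξ| e₁ = ξ`. -/

open Finset

lemma sum_range_two_mul_ite_mod_two {M : Type*} [AddCommMonoid M] (x y : M) (m : ℕ) :
    ∑ j ∈ range (2 * m), (if j % 2 = 0 then x else y) = m • (x + y) := by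
  induction m with
  | zero => simp
  | succ m ih =>
    rw [mul_add_one, sum_range_succ, sum_range_succ, ih, Nat.mul_mod_right,
      if_pos rfl, if_neg (by omega), succ_nsmul, add_assoc]

lemma sum_fin_ite_mod_two_of_even {M : Type*} [AddCommMonoid M] (x y : M) {ℓ : ℕ}
    (hℓ : Even ℓ) :
    ∑ j : Fin ℓ, (if (j : ℕ) % 2 = 0 then x else y) = (ℓ / 2) • (x + y) := by
  obtain ⟨m, rfl⟩ := hℓ
  rw [Fin.sum_univ_eq_sum_range (fun j => if j % 2 = 0 then x else y), ← two_mul,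
    sum_range_two_mul_ite_mod_two, Nat.mul_div_cancel_left m two_pos]

lemma sq_div_le_sq_of_le_add_one_mul {r k ℓ : ℝ} (hℓ : 1 ≤ ℓ) (hr : 0 ≤ r)
    (hrk : r ≤ (ℓ + 1) * k) : ((r - k) / ℓ) ^ 2 ≤ k ^ 2 := by
  have hk : 0 ≤ k := nonneg_of_mul_nonneg_right (hr.trans hrk) (by linarith)
  apply sq_le_sq'
  · rw [le_div_iff₀ (by linarith)]
    nlinarith
  · rw [div_le_iff₀ (by linarith)]
    linarith

section InnerProductSpace

variable {E : Type*} [NormedAddCommGroup E] [InnerProductSpace ℝ E]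

lemma norm_smul_add_smul_sq_of_orthonormal {u v : E} (hu : ‖u‖ = 1) (hv : ‖v‖ = 1)
    (huv : inner ℝ u v = 0) (a b : ℝ) : ‖a • u + b • v‖ ^ 2 = a ^ 2 + b ^ 2 := by
  have horth : inner ℝ (a • u) (b • v) = 0 := by
    rw [real_inner_smul_left, real_inner_smul_right, huv, mul_zero, mul_zero]
  rw [sq, norm_add_sq_eq_norm_sq_add_norm_sq_real horth, norm_smul, norm_smul, hu, hv,
    Real.norm_eq_abs, Real.norm_eq_abs, mul_one, mul_one, ← sq, ← sq, sq_abs, sq_abs]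

lemma inner_self_smul_add_sqrt_smul {u v : E} (hu : ‖u‖ = 1) (hv : ‖v‖ = 1)
    (huv : inner ℝ u v = 0) {a k : ℝ} (hak : a ^ 2 ≤ k ^ 2) :
    inner ℝ (a • u + √(k ^ 2 - a ^ 2) • v) (a • u + √(k ^ 2 - a ^ 2) • v) = k ^ 2 := by
  rw [real_inner_self_eq_norm_sq, norm_smul_add_smul_sq_of_orthonormal hu hv huv,
    Real.sq_sqrt (sub_nonneg.mpr hak), add_sub_cancel]

lemma inner_self_smul_sub_sqrt_smul {u v : E} (hu : ‖u‖ = 1) (hv : ‖v‖ = 1)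
    (huv : inner ℝ u v = 0) {a k : ℝ} (hak : a ^ 2 ≤ k ^ 2) :
    inner ℝ (a • u - √(k ^ 2 - a ^ 2) • v) (a • u - √(k ^ 2 - a ^ 2) • v) = k ^ 2 := by
  rw [sub_eq_add_neg, ← smul_neg]
  exact inner_self_smul_add_sqrt_smul hu (by rwa [norm_neg])
    (by rwa [inner_neg_right, neg_eq_zero]) hak

end InnerProductSpace

theorem stmt_7_general (n ℓ : ℕ) (hℓ : Even ℓ) (hℓpos : 0 < ℓ)
    (k : ℝ)
    (ξ e₂ : EuclideanSpace ℝ (Fin n)) (hξ : ξ ≠ 0)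
    (hξk : ‖ξ‖ ≤ ((ℓ : ℝ) + 1) * k)
    (he₂ : ‖e₂‖ = 1) (horth : (inner ℝ ξ e₂ : ℝ) = 0)
    (e₁ : EuclideanSpace ℝ (Fin n)) (he₁ : e₁ = ‖ξ‖⁻¹ • ξ)
    (ζp ζm : EuclideanSpace ℝ (Fin n))
    (hζp : ζp = ((‖ξ‖ - k) / (ℓ : ℝ)) • e₁
        + Real.sqrt (k ^ 2 - ((‖ξ‖ - k) / (ℓ : ℝ)) ^ 2) • e₂)
    (hζm : ζm = ((‖ξ‖ - k) / (ℓ : ℝ)) • e₁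
        - Real.sqrt (k ^ 2 - ((‖ξ‖ - k) / (ℓ : ℝ)) ^ 2) • e₂)
    (ζ₀ : EuclideanSpace ℝ (Fin n)) (hζ₀ : ζ₀ = k • e₁)
    (ζ : Fin ℓ → EuclideanSpace ℝ (Fin n))
    (hζ : ∀ j : Fin ℓ, ζ j = if (j : ℕ) % 2 = 0 then ζp else ζm) :
    (inner ℝ ζ₀ ζ₀ : ℝ) = k ^ 2 ∧
    (∀ j : Fin ℓ, (inner ℝ (ζ j) (ζ j) : ℝ) = k ^ 2) ∧
    ζ₀ + ∑ j, ζ j = ξ := by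
  have he₁_norm : ‖e₁‖ = 1 := he₁ ▸ norm_smul_inv_norm hξ
  have he₁₂ : inner ℝ e₁ e₂ = 0 := by rw [he₁, real_inner_smul_left, horth, mul_zero]
  have hℓ₁ : (1 : ℝ) ≤ ℓ := by exact_mod_cast hℓpos
  have ha := sq_div_le_sq_of_le_add_one_mul hℓ₁ (norm_nonneg ξ) hξk
  refine ⟨?_, fun j => ?_, ?_⟩
  · rw [hζ₀, real_inner_smul_left, real_inner_smul_right, real_inner_self_eq_norm_sq,
      he₁_norm]
    ring
  · rw [hζ j]
    split
    · exact hζp ▸ inner_self_smul_add_sqrt_smul he₁_norm he₂ he₁₂ ha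
    · exact hζm ▸ inner_self_smul_sub_sqrt_smul he₁_norm he₂ he₁₂ ha
  · have hℓ_half : ((ℓ / 2 : ℕ) : ℝ) = ℓ / 2 := Nat.cast_div (even_iff_two_dvd.mp hℓ) two_ne_zero
    have hpm : ζp + ζm = (2 * ((‖ξ‖ - k) / ℓ)) • e₁ := by
      rw [hζp, hζm, two_mul, add_smul]
      abel
    rw [Fintype.sum_congr _ _ hζ, sum_fin_ite_mod_two_of_even _ _ hℓ, hpm, hζ₀,
      ← Nat.cast_smul_eq_nsmul ℝ, smul_smul, ← add_smul, hℓ_half, he₁, smul_smul]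
    convert one_smul ℝ ξ
    field_simp
    ring

theorem stmt_7 (n ℓ : ℕ) (hn : 2 ≤ n) (hℓ : Even ℓ) (hℓpos : 0 < ℓ)
    (k : ℝ) (hk : 0 < k)
    (ξ e₂ : EuclideanSpace ℝ (Fin n)) (hξ : ξ ≠ 0)
    (hξk : ‖ξ‖ ≤ ((ℓ : ℝ) + 1) * k)
    (he₂ : ‖e₂‖ = 1) (horth : (inner ℝ ξ e₂ : ℝ) = 0)
    (e₁ : EuclideanSpace ℝ (Fin n)) (he₁ : e₁ = ‖ξ‖⁻¹ • ξ)
    (ζp ζm : EuclideanSpace ℝ (Fin n))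
    (hζp : ζp = ((‖ξ‖ - k) / (ℓ : ℝ)) • e₁
        + Real.sqrt (k ^ 2 - ((‖ξ‖ - k) / (ℓ : ℝ)) ^ 2) • e₂)
    (hζm : ζm = ((‖ξ‖ - k) / (ℓ : ℝ)) • e₁
        - Real.sqrt (k ^ 2 - ((‖ξ‖ - k) / (ℓ : ℝ)) ^ 2) • e₂)
    (ζ₀ : EuclideanSpace ℝ (Fin n)) (hζ₀ : ζ₀ = k • e₁)
    (ζ : Fin ℓ → EuclideanSpace ℝ (Fin n))
    (hζ : ∀ j : Fin ℓ, ζ j = if (j : ℕ) % 2 = 0 then ζp else ζm) :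
    (inner ℝ ζ₀ ζ₀ : ℝ) = k ^ 2 ∧
    (∀ j : Fin ℓ, (inner ℝ (ζ j) (ζ j) : ℝ) = k ^ 2) ∧
    ζ₀ + ∑ j, ζ j = ξ :=
  stmt_7_general n ℓ hℓ hℓpos k ξ e₂ hξ hξk he₂ horth e₁ he₁ ζp ζm hζp hζm ζ₀ hζ₀ ζ hζ
end

section
/- Let ℓ ≥ 1 and m > ℓ. For complex numbers w₁,…,w_ℓ and coefficients c₁,…,c_m (constants), define P(u) = Σ_{ℓ'=1}^{m} c_{ℓ'} u^{ℓ'}. Then (1/ℓ!) Σ over nonempty S ⊆ {1,…,ℓ} of (−1)^{ℓ−|S|} P(Σ_{j∈S} w_j) = (c_ℓ + Σ_{a=1}^{m−ℓ} c_{ℓ+a} Q_{ℓ,a}(w₁,…,w_ℓ)) · ∏_{j=1}^{ℓ} w_j. -/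
open Finset

/-- The multivariate polynomial `Q_{ℓ,a}(w₁,…,w_ℓ)` from the paper. -/
noncomputable def Q (ℓ a : ℕ) (w : Fin ℓ → ℂ) : ℂ :=
  ((Nat.factorial ℓ : ℂ))⁻¹ *
    ∑ α ∈ Finset.Nat.antidiagonalTuple ℓ a,
      ((Nat.factorial (ℓ + a) : ℂ) / ∏ j, (Nat.factorial (1 + α j) : ℂ)) *
        ∏ j, w j ^ α j

/-!
Write `∑ j ∈ S, w j` as `∑ j, [j ∈ S] w j` and expand its `n`-th power by the multinomial
theorem. For a fixed exponent vector `k`, the alternating sum over `S` of the monomial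
`∏ j, ([j ∈ S] w j) ^ k j` factors as `∏ j, (w j ^ k j - 0 ^ k j)`, which vanishes as soon as
some `k j = 0`. So only the compositions `k = α + 1` of `n` into `ℓ` positive parts survive:
there are none when `n < ℓ`, and for `n = ℓ + a` the multinomial coefficients
`(ℓ + a)! / ∏ j, (1 + α j)!` reassemble into `ℓ! * Q ℓ a w * ∏ j, w j`.
-/

namespace Finset

variable {ι R : Type*} [Fintype ι] [CommRing R]

theorem prod_pow_sub_zero_pow (w : ι → R) (k : ι → ℕ) :
    ∏ i, (w i ^ k i - 0 ^ k i) = if ∀ i, k i ≠ 0 then ∏ i, w i ^ k i else 0 := by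
  split_ifs with h
  · exact prod_congr rfl fun i _ => by simp [zero_pow (h i)]
  · obtain ⟨i, hi⟩ := not_forall_not.1 h
    exact prod_eq_zero (mem_univ i) (by simp [hi])

variable [DecidableEq ι]

theorem sum_powerset_neg_one_pow_mul_prod_ite (f g : ι → R) :
    ∑ S ∈ (univ : Finset ι).powerset,
        (-1) ^ (Fintype.card ι - #S) * ∏ i, (if i ∈ S then f i else g i)
      = ∏ i, (f i - g i) := by
  simp_rw [sub_eq_add_neg, prod_add, prod_neg, prod_ite, ← compl_eq_univ_sdiff, card_compl]
  refine sum_congr rfl fun S _ => ?_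
  simp only [filter_mem_eq_inter, univ_inter, filter_not, ← compl_eq_univ_sdiff]
  ring

theorem sum_powerset_neg_one_pow_mul_sum_pow (w : ι → R) (n : ℕ) :
    ∑ S ∈ (univ : Finset ι).powerset, (-1) ^ (Fintype.card ι - #S) * (∑ j ∈ S, w j) ^ n
      = ∑ k ∈ piAntidiag univ n with ∀ i, k i ≠ 0, Nat.multinomial univ k * ∏ i, w i ^ k i := by
  have expand (S : Finset ι) : (∑ j ∈ S, w j) ^ n = ∑ k ∈ piAntidiag univ n,
      Nat.multinomial univ k * ∏ i, (if i ∈ S then w i ^ k i else 0 ^ k i) := by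
    rw [← univ_inter S, ← sum_ite_mem, sum_pow_eq_sum_piAntidiag]
    simp only [ite_pow, univ_inter]
  simp_rw [expand, mul_sum, mul_left_comm _ (Nat.multinomial _ _ : R)]
  rw [sum_comm]
  simp_rw [← mul_sum, sum_powerset_neg_one_pow_mul_prod_ite, prod_pow_sub_zero_pow, mul_ite,
    mul_zero, sum_ite, sum_const_zero, add_zero]

theorem filter_piAntidiag_forall_ne_zero_eq_empty {n : ℕ} (hn : n < Fintype.card ι) :
    {k ∈ piAntidiag (univ : Finset ι) n | ∀ i, k i ≠ 0} = ∅ := by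
  refine filter_false_of_mem fun k hk hpos => hn.not_ge ?_
  rw [mem_piAntidiag] at hk
  calc Fintype.card ι = ∑ _i : ι, 1 := by simp
    _ ≤ ∑ i, k i := sum_le_sum fun i _ => Nat.one_le_iff_ne_zero.2 (hpos i)
    _ = n := hk.1

theorem sum_powerset_neg_one_pow_mul_sum_pow_of_lt (w : ι → R) {n : ℕ}
    (hn : n < Fintype.card ι) :
    ∑ S ∈ (univ : Finset ι).powerset, (-1) ^ (Fintype.card ι - #S) * (∑ j ∈ S, w j) ^ n = 0 := by
  rw [sum_powerset_neg_one_pow_mul_sum_pow, filter_piAntidiag_forall_ne_zero_eq_empty hn,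
    sum_empty]

theorem sum_filter_piAntidiag_forall_ne_zero {M : Type*} [AddCommMonoid M]
    (f : (ι → ℕ) → M) (a : ℕ) :
    ∑ k ∈ piAntidiag univ (Fintype.card ι + a) with ∀ i, k i ≠ 0, f k
      = ∑ α ∈ piAntidiag univ a, f (α + 1) := by
  have card_add (α : ι → ℕ) : univ.sum (α + 1) = Fintype.card ι + univ.sum α := by
    simp [sum_add_distrib, add_comm]
  symm
  refine sum_nbij' (· + 1) (· - 1) (fun α hα => ?_) (fun k hk => ?_) (fun α _ => ?_)
    (fun k hk => ?_) (fun _ _ => rfl)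
  · simp_all
  · simp only [mem_filter, mem_piAntidiag, mem_univ, implies_true, and_true] at hk
    have hk1 : k - 1 + 1 = k :=
      funext fun i => Nat.sub_add_cancel (Nat.one_le_iff_ne_zero.2 (hk.2 i))
    have := card_add (k - 1)
    rw [hk1, hk.1] at this
    simp only [mem_piAntidiag, mem_univ, implies_true, and_true]
    omega
  · simp
  · simp only [mem_filter] at hk
    exact funext fun i => Nat.sub_add_cancel (Nat.one_le_iff_ne_zero.2 (hk.2 i))

theorem sum_Icc_one_eq_add_sum_Icc_add {M : Type*} [AddCommMonoid M] {ℓ m : ℕ}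
    (f : ℕ → M) (hℓ : 1 ≤ ℓ) (hm : ℓ ≤ m) (hf : ∀ n < ℓ, f n = 0) :
    ∑ n ∈ Icc 1 m, f n = f ℓ + ∑ a ∈ Icc 1 (m - ℓ), f (ℓ + a) := by
  have hsub : Icc ℓ m ⊆ Icc 1 m := Icc_subset_Icc_left hℓ
  rw [← sum_subset hsub fun n hn hn' => hf n (by simp only [mem_Icc] at hn hn'; omega),
    ← insert_Icc_add_one_left_eq_Icc hm, sum_insert (by simp)]
  congr 1
  have shift := sum_map (Icc 1 (m - ℓ)) (addLeftEmbedding ℓ) f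
  rw [map_add_left_Icc, Nat.add_sub_cancel' hm] at shift
  exact shift

end Finset

theorem Nat.cast_multinomial {α K : Type*} [Field K] [CharZero K] (s : Finset α)
    (f : α → ℕ) :
    (Nat.multinomial s f : K) = (∑ i ∈ s, f i).factorial / ∏ i ∈ s, ((f i).factorial : K) := by
  rw [eq_div_iff (prod_ne_zero_iff.2 fun i _ => Nat.cast_ne_zero.2 (Nat.factorial_ne_zero _)),
    ← Nat.multinomial_spec s f]
  push_cast
  ring

theorem Q_zero (ℓ : ℕ) (w : Fin ℓ → ℂ) : Q ℓ 0 w = 1 := by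
  simp only [Q, Finset.Nat.antidiagonalTuple_zero_right]
  simp [Nat.factorial_ne_zero]

theorem sum_powerset_neg_one_pow_mul_sum_pow_add_eq_Q {ℓ : ℕ} (w : Fin ℓ → ℂ) (a : ℕ) :
    ∑ S ∈ (univ : Finset (Fin ℓ)).powerset, (-1 : ℂ) ^ (ℓ - #S) * (∑ j ∈ S, w j) ^ (ℓ + a)
      = ℓ.factorial * Q ℓ a w * ∏ j, w j := by
  have expand := sum_powerset_neg_one_pow_mul_sum_pow w (ℓ + a)
  have reindex := sum_filter_piAntidiag_forall_ne_zero
    (fun k => (Nat.multinomial univ k : ℂ) * ∏ i, w i ^ k i) a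
  simp only [Fintype.card_fin] at expand reindex
  rw [expand, reindex, piAntidiag_univ_fin_eq_antidiagonalTuple, Q, ← mul_assoc,
    mul_inv_cancel₀ (Nat.cast_ne_zero.2 (Nat.factorial_ne_zero ℓ)), one_mul, sum_mul]
  refine sum_congr rfl fun α hα => ?_
  rw [Nat.mem_antidiagonalTuple] at hα
  have hsum : ∑ i, (α + 1) i = ℓ + a := by simp [sum_add_distrib, hα, add_comm]
  rw [mul_assoc, ← prod_mul_distrib, Nat.cast_multinomial, hsum]
  simp only [Pi.add_apply, Pi.one_apply, pow_succ]
  simp only [add_comm (α _) 1]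

theorem stmt_16 (ℓ m : ℕ) (hℓ : 1 ≤ ℓ) (hm : ℓ < m)
    (w : Fin ℓ → ℂ) (c : ℕ → ℂ)
    (P : ℂ → ℂ) (hP : P = fun u => ∑ ℓ' ∈ Finset.Icc 1 m, c ℓ' * u ^ ℓ') :
    ((Nat.factorial ℓ : ℂ))⁻¹ *
      ∑ S ∈ (Finset.univ : Finset (Fin ℓ)).powerset.filter (fun S => S.Nonempty),
        (-1 : ℂ) ^ (ℓ - S.card) * P (∑ j ∈ S, w j)
      = (c ℓ + ∑ a ∈ Finset.Icc 1 (m - ℓ), c (ℓ + a) * Q ℓ a w) * ∏ j, w j := by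
  subst hP
  dsimp only
  have vanish_empty : ∀ n ∈ Icc 1 m, c n * (∑ j ∈ (∅ : Finset (Fin ℓ)), w j) ^ n = 0 :=
    fun n hn => by simp [zero_pow (Nat.one_le_iff_ne_zero.1 (mem_Icc.1 hn).1)]
  rw [sum_filter_of_ne fun S _ hS => nonempty_iff_ne_empty.2 fun hS0 => hS (by
    rw [hS0, sum_eq_zero vanish_empty, mul_zero])]
  have swap : ∑ S ∈ (univ : Finset (Fin ℓ)).powerset,
        (-1 : ℂ) ^ (ℓ - #S) * ∑ n ∈ Icc 1 m, c n * (∑ j ∈ S, w j) ^ n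
      = ∑ n ∈ Icc 1 m, c n *
          ∑ S ∈ (univ : Finset (Fin ℓ)).powerset, (-1 : ℂ) ^ (ℓ - #S) * (∑ j ∈ S, w j) ^ n := by
    simp_rw [mul_sum, mul_left_comm (c _)]
    exact sum_comm
  have leading := sum_powerset_neg_one_pow_mul_sum_pow_add_eq_Q w 0
  rw [add_zero, Q_zero, mul_one] at leading
  rw [swap, sum_Icc_one_eq_add_sum_Icc_add _ hℓ hm.le fun n hn => by
    have lower := sum_powerset_neg_one_pow_mul_sum_pow_of_lt w (n := n) (by simpa using hn)
    rw [Fintype.card_fin] at lower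
    rw [lower, mul_zero]]
  simp_rw [leading, sum_powerset_neg_one_pow_mul_sum_pow_add_eq_Q]
  have hfac : (ℓ.factorial : ℂ) ≠ 0 := Nat.cast_ne_zero.2 (Nat.factorial_ne_zero ℓ)
  rw [add_mul, sum_mul, mul_add, mul_sum]
  congr 1
  · field_simp
  · exact sum_congr rfl fun a _ => by field_simp
end
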